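/- Let z0 ∈ ℂ, x0 ∈ ℂ^n, d0 ∈ ℂ^o and a0 ∈ ℂ^m satisfy (A − z0 I) x0 + B_d d0 + B_a a0 = 0 and C x0 + D_d d0 + D_a a0 = 0. Then, taking initial state x(0) = x0, disturbance d(k) = z0^k d0, and attack a(k) = z0^k a0, the state trajectory satisfies x(k) = z0^k x0 for all k ≥ 0 and the output satisfies y(a,d,x0)(k) = 0 for all k ≥ 0; in particular, the exponential attack a(k) = z0^k a0 is undetectable. -/

import Mathlib

open Filter

noncomputable section

/-- State trajectory of `x(k+1) = A x(k) + B_d d(k) + B_a a(k)` with `x(0) = x0`. -/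
def traj {n o m : ℕ} (A : Matrix (Fin n) (Fin n) ℂ) (Bd : Matrix (Fin n) (Fin o) ℂ)
    (Ba : Matrix (Fin n) (Fin m) ℂ) (a : ℕ → Fin m → ℂ) (d : ℕ → Fin o → ℂ)
    (x0 : Fin n → ℂ) : ℕ → Fin n → ℂ
  | 0 => x0
  | k + 1 => A.mulVec (traj A Bd Ba a d x0 k) + Bd.mulVec (d k) + Ba.mulVec (a k)

/-- Output `y(a,d,x0)(k) = C x(k) + D_d d(k) + D_a a(k)`. -/
def output {n o m p : ℕ} (A : Matrix (Fin n) (Fin n) ℂ) (Bd : Matrix (Fin n) (Fin o) ℂ)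
    (Ba : Matrix (Fin n) (Fin m) ℂ) (C : Matrix (Fin p) (Fin n) ℂ)
    (Dd : Matrix (Fin p) (Fin o) ℂ) (Da : Matrix (Fin p) (Fin m) ℂ)
    (a : ℕ → Fin m → ℂ) (d : ℕ → Fin o → ℂ) (x0 : Fin n → ℂ) (k : ℕ) : Fin p → ℂ :=
  C.mulVec (traj A Bd Ba a d x0 k) + Dd.mulVec (d k) + Da.mulVec (a k)

/-- `‖a‖₀`: the number of component signals of `a` that are not identically zero. -/
def sparsity {m : ℕ} (a : ℕ → Fin m → ℂ) : ℕ := {j : Fin m | ∃ k, a k j ≠ 0}.ncard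

/-- A persistent attack does not converge to `0`. -/
def Persistent {m : ℕ} (a : ℕ → Fin m → ℂ) : Prop := ¬ Tendsto a atTop (nhds 0)

/-- Undetectable: some disturbance and initial state give identically zero output. -/
def Undetectable {n o m p : ℕ} (A : Matrix (Fin n) (Fin n) ℂ) (Bd : Matrix (Fin n) (Fin o) ℂ)
    (Ba : Matrix (Fin n) (Fin m) ℂ) (C : Matrix (Fin p) (Fin n) ℂ)
    (Dd : Matrix (Fin p) (Fin o) ℂ) (Da : Matrix (Fin p) (Fin m) ℂ)
    (a : ℕ → Fin m → ℂ) : Prop :=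
  ∃ d x0, ∀ k, output A Bd Ba C Dd Da a d x0 k = 0

/-- Security index `α_i`: minimal `‖a‖₀` over persistent undetectable attacks whose
`i`-th component signal is not identically zero (`⊤` if none exists). -/
def secIndex {n o m p : ℕ} (A : Matrix (Fin n) (Fin n) ℂ) (Bd : Matrix (Fin n) (Fin o) ℂ)
    (Ba : Matrix (Fin n) (Fin m) ℂ) (C : Matrix (Fin p) (Fin n) ℂ)
    (Dd : Matrix (Fin p) (Fin o) ℂ) (Da : Matrix (Fin p) (Fin m) ℂ) (i : Fin m) : ℕ∞ :=
  sInf {c : ℕ∞ | ∃ a : ℕ → Fin m → ℂ, Persistent a ∧ Undetectable A Bd Ba C Dd Da a ∧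
    (∃ k, a k i ≠ 0) ∧ c = (sparsity a : ℕ∞)}

variable {n o m p : ℕ} (A : Matrix (Fin n) (Fin n) ℂ) (Bd : Matrix (Fin n) (Fin o) ℂ)
  (Ba : Matrix (Fin n) (Fin m) ℂ) (C : Matrix (Fin p) (Fin n) ℂ)
  (Dd : Matrix (Fin p) (Fin o) ℂ) (Da : Matrix (Fin p) (Fin m) ℂ)

open Matrix

theorem Matrix.sub_smul_one_mulVec_add_eq_zero_iff {ι R : Type*} [Fintype ι] [DecidableEq ι]
    [CommRing R] (M : Matrix ι ι R) (z : R) (x v : ι → R) :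
    (M - z • (1 : Matrix ι ι R)) *ᵥ x + v = 0 ↔ M *ᵥ x + v = z • x := by
  rw [sub_mulVec, smul_mulVec, one_mulVec, sub_add_eq_add_sub, sub_eq_zero]

theorem traj_geometric (z : ℂ) (x0 : Fin n → ℂ) (d0 : Fin o → ℂ) (a0 : Fin m → ℂ)
    (h : A *ᵥ x0 + Bd *ᵥ d0 + Ba *ᵥ a0 = z • x0) (k : ℕ) :
    traj A Bd Ba (fun j => z ^ j • a0) (fun j => z ^ j • d0) x0 k = z ^ k • x0 := by
  induction k with
  | zero => exact (one_smul ℂ x0).symm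
  | succ k ih =>
    calc A *ᵥ traj A Bd Ba (fun j => z ^ j • a0) (fun j => z ^ j • d0) x0 k
          + Bd *ᵥ (z ^ k • d0) + Ba *ᵥ (z ^ k • a0)
        = z ^ k • (A *ᵥ x0 + Bd *ᵥ d0 + Ba *ᵥ a0) := by
          simp only [ih, mulVec_smul, smul_add]
      _ = z ^ (k + 1) • x0 := by rw [h, smul_smul, pow_succ]

theorem output_geometric (z : ℂ) (x0 : Fin n → ℂ) (d0 : Fin o → ℂ) (a0 : Fin m → ℂ)
    (h : A *ᵥ x0 + Bd *ᵥ d0 + Ba *ᵥ a0 = z • x0) (k : ℕ) :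
    output A Bd Ba C Dd Da (fun j => z ^ j • a0) (fun j => z ^ j • d0) x0 k =
      z ^ k • (C *ᵥ x0 + Dd *ᵥ d0 + Da *ᵥ a0) := by
  simp only [output, traj_geometric A Bd Ba z x0 d0 a0 h, mulVec_smul, smul_add]

theorem exponential_attack_undetectable (z0 : ℂ) (x0 : Fin n → ℂ)
    (d0 : Fin o → ℂ) (a0 : Fin m → ℂ)
    (h1 : (A - z0 • (1 : Matrix (Fin n) (Fin n) ℂ)).mulVec x0 +
      Bd.mulVec d0 + Ba.mulVec a0 = 0)
    (h2 : C.mulVec x0 + Dd.mulVec d0 + Da.mulVec a0 = 0) :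
    (∀ k, traj A Bd Ba (fun k => z0 ^ k • a0) (fun k => z0 ^ k • d0) x0 k = z0 ^ k • x0) ∧
    (∀ k, output A Bd Ba C Dd Da (fun k => z0 ^ k • a0) (fun k => z0 ^ k • d0) x0 k = 0) ∧
    Undetectable A Bd Ba C Dd Da (fun k => z0 ^ k • a0) := by
  have hstate : A *ᵥ x0 + Bd *ᵥ d0 + Ba *ᵥ a0 = z0 • x0 := by
    rw [add_assoc, ← sub_smul_one_mulVec_add_eq_zero_iff, ← add_assoc, h1]
  have hout : ∀ k, output A Bd Ba C Dd Da (fun k => z0 ^ k • a0)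
      (fun k => z0 ^ k • d0) x0 k = 0 := fun k => by
    rw [output_geometric A Bd Ba C Dd Da z0 x0 d0 a0 hstate, h2, smul_zero]
  exact ⟨traj_geometric A Bd Ba z0 x0 d0 a0 hstate, hout, fun k => z0 ^ k • d0, x0, hout⟩
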